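/- arXiv:1103.4331 — 2 statements merged into one kernel-verified Lean document; each statement's English description precedes it below -/
import Mathlib

section
/- If f(ξ) is a quasielliptic polynomial of degree d with respect to w, then for a with gcd(a,d) > 1 and τ ∈ ℚ_p^× not a gcd(a,d)-th power in ℚ_p^×, the polynomial (f(ξ₁,…,ξₙ))^a − τ ξ_{n+1}^d is quasielliptic of degree da with respect to (w₁,…,wₙ,a). -/
open MvPolynomial

/-- `f ∈ ℚ_p[ξ₁,…,ξₙ]` is quasielliptic of degree `d` with respect to weights `w`. -/
def IsQuasielliptic (p : ℕ) [Fact p.Prime] {n : ℕ} (d : ℕ) (w : Fin n → ℕ)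
    (f : MvPolynomial (Fin n) ℚ_[p]) : Prop :=
  f.totalDegree ≠ 0 ∧ (∀ i, 0 < w i) ∧
    (∀ lam : ℚ_[p], lam ≠ 0 → ∀ ξ : Fin n → ℚ_[p],
      eval (fun i => lam ^ (w i) * ξ i) f = lam ^ d * eval ξ f) ∧
    (∀ ξ : Fin n → ℚ_[p], eval ξ f = 0 ↔ ξ = 0)

section Aux

variable {K : Type*} [Field K] {n : ℕ}

/-- Evaluating an `aeval` into `Polynomial K`. -/
lemma eval_aeval_polynomial (f : MvPolynomial (Fin n) K) (φ : Fin n → Polynomial K) (x : K) :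
    ((MvPolynomial.aeval φ f).eval x) = eval (fun i => (φ i).eval x) f := by
  induction f using MvPolynomial.induction_on with
  | C c => simp
  | add q r hq hr => simp [hq, hr]
  | mul_X q i hq => simp [hq]

lemma eval_const_of_totalDegree_eq_zero (f : MvPolynomial (Fin n) K)
    (h : f.totalDegree = 0) (ξ η : Fin n → K) : eval ξ f = eval η f := by
  rw [MvPolynomial.totalDegree_eq_zero_iff] at h
  rw [MvPolynomial.eval_eq, MvPolynomial.eval_eq]
  apply Finset.sum_congr rfl
  intro m hm
  have hp : ∀ θ : Fin n → K, (∏ i ∈ m.support, θ i ^ m i) = 1 := fun θ =>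
    Finset.prod_eq_one (fun i _ => by rw [h m hm i, pow_zero])
  rw [hp, hp]

end Aux

/-- A quasielliptic polynomial has positive degree `d`. -/
lemma IsQuasielliptic.d_pos (p : ℕ) [Fact p.Prime] {n : ℕ} (d : ℕ) (w : Fin n → ℕ)
    (f : MvPolynomial (Fin n) ℚ_[p]) (hf : IsQuasielliptic p d w f) : 0 < d := by
  obtain ⟨htd, hw, hhom, hzero⟩ := hf
  by_contra hd
  push_neg at hd
  interval_cases d
  -- d = 0 : derive f is constant zero, contradiction with totalDegree ≠ 0
  -- pick ξ with eval ξ f ≠ 0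
  have hfne : f ≠ 0 := by
    intro h
    apply htd
    rw [h, MvPolynomial.totalDegree_zero]
  obtain ⟨ξ, hξ⟩ : ∃ ξ : Fin n → ℚ_[p], eval ξ f ≠ 0 := by
    by_contra h
    push_neg at h
    apply hfne
    apply MvPolynomial.funext
    intro x
    simp [h x]
  -- consider the one-variable polynomial λ ↦ f(λ^{w i} ξ i)
  set g : Polynomial ℚ_[p] :=
    MvPolynomial.aeval (fun i => (Polynomial.X : Polynomial ℚ_[p]) ^ (w i)
      * Polynomial.C (ξ i)) f with hg
  have hgeval : ∀ x : ℚ_[p], g.eval x = eval (fun i => x ^ (w i) * ξ i) f := by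
    intro x
    rw [hg, eval_aeval_polynomial]
    simp only [Polynomial.eval_mul, Polynomial.eval_pow, Polynomial.eval_X, Polynomial.eval_C]
  have hgc : g = Polynomial.C (eval ξ f) := by
    apply Polynomial.eq_of_infinite_eval_eq
    apply Set.Infinite.mono (s := {x : ℚ_[p] | x ≠ 0})
    · intro x hx
      simp only [Set.mem_setOf_eq] at hx ⊢
      rw [hgeval x, hhom x hx ξ, pow_zero, one_mul, Polynomial.eval_C]
    · have : ({x : ℚ_[p] | x ≠ 0}) = {(0 : ℚ_[p])}ᶜ := by ext x; simp
      rw [this]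
      exact (Set.finite_singleton (0 : ℚ_[p])).infinite_compl
  -- evaluate at 0
  have h0 : g.eval 0 = 0 := by
    rw [hgeval 0]
    have : (fun i => (0 : ℚ_[p]) ^ (w i) * ξ i) = 0 := by
      funext i
      simp [zero_pow (hw i).ne']
    rw [this, (hzero 0).mpr rfl]
  rw [hgc, Polynomial.eval_C] at h0
  exact hξ h0

/-- If `f` is quasielliptic of degree `d` w.r.t. `w`, `a ≥ 1` with
`gcd(a,d) > 1`, and `τ ∈ ℚ_p^×` is not a `gcd(a,d)`-th power, then
`f(ξ₁,…,ξₙ)^a − τ ξ_{n+1}^d` is quasielliptic of degree `d·a` w.r.t. `(w₁,…,wₙ,a)`. -/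
theorem power_sub_isQuasielliptic (p : ℕ) [Fact p.Prime] {n : ℕ} (d : ℕ)
    (w : Fin n → ℕ) (f : MvPolynomial (Fin n) ℚ_[p])
    (hf : IsQuasielliptic p d w f) (a : ℕ) (ha : 0 < a) (hgcd : 1 < Nat.gcd a d)
    (τ : ℚ_[p]) (hτ : τ ≠ 0) (hτpow : ¬ ∃ y : ℚ_[p], y ^ (Nat.gcd a d) = τ) :
    IsQuasielliptic p (d * a) (Fin.snoc w a)
      ((rename Fin.castSucc f) ^ a - C τ * X (Fin.last n) ^ d) := by
  have hd : 0 < d := hf.d_pos p d w f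
  obtain ⟨htd, hw, hhom, hzero⟩ := hf
  set F : MvPolynomial (Fin (n + 1)) ℚ_[p] :=
    (rename Fin.castSucc f) ^ a - C τ * X (Fin.last n) ^ d with hF
  -- evaluation formula
  have hFeval : ∀ ξ : Fin (n + 1) → ℚ_[p],
      eval ξ F = (eval (fun i => ξ (Fin.castSucc i)) f) ^ a - τ * (ξ (Fin.last n)) ^ d := by
    intro ξ
    simp [hF, MvPolynomial.eval_rename, Function.comp_def]
  refine ⟨?_, ?_, ?_, ?_⟩
  · -- totalDegree ≠ 0
    intro h
    have h1 : eval (0 : Fin (n + 1) → ℚ_[p]) F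
        = eval (Function.update (0 : Fin (n + 1) → ℚ_[p]) (Fin.last n) 1) F :=
      eval_const_of_totalDegree_eq_zero F h _ _
    rw [hFeval, hFeval] at h1
    have e0 : eval (fun i => (0 : Fin (n + 1) → ℚ_[p]) (Fin.castSucc i)) f = 0 :=
      (hzero _).mpr rfl
    have e1 : eval (fun i =>
        (Function.update (0 : Fin (n + 1) → ℚ_[p]) (Fin.last n) 1) (Fin.castSucc i)) f = 0 := by
      apply (hzero _).mpr
      funext i
      simp [Function.update_apply, (Fin.castSucc_lt_last i).ne]
    rw [e0, e1] at h1
    simp only [Pi.zero_apply, Function.update_self, one_pow, mul_one,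
      zero_pow ha.ne', zero_pow hd.ne', mul_zero, sub_zero, zero_sub] at h1
    exact hτ (neg_eq_zero.mp h1.symm)
  · -- positivity of weights
    intro i
    rcases Fin.eq_castSucc_or_eq_last i with ⟨j, rfl⟩ | rfl
    · simpa using hw j
    · simpa using ha
  · -- homogeneity
    intro lam hlam ξ
    rw [hFeval, hFeval]
    have h1 : (fun i => (fun j : Fin (n + 1) => lam ^ ((Fin.snoc w a : Fin (n + 1) → ℕ) j) * ξ j)
          (Fin.castSucc i)) = fun i => lam ^ (w i) * ξ (Fin.castSucc i) := by
      funext i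
      simp
    have h2 : ((fun j : Fin (n + 1) => lam ^ ((Fin.snoc w a : Fin (n + 1) → ℕ) j) * ξ j) (Fin.last n))
        = lam ^ a * ξ (Fin.last n) := by simp
    rw [h1]
    simp only [Fin.snoc_last]
    rw [hhom lam hlam]
    rw [mul_pow, mul_pow, ← pow_mul, ← pow_mul, Nat.mul_comm a d]
    ring
  · -- zero set
    intro ξ
    rw [hFeval]
    constructor
    · intro h
      have key : (eval (fun i => ξ (Fin.castSucc i)) f) ^ a = τ * (ξ (Fin.last n)) ^ d :=
        sub_eq_zero.mp h
      by_cases hlast : ξ (Fin.last n) = 0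
      · have : (eval (fun i => ξ (Fin.castSucc i)) f) ^ a = 0 := by
          rw [key, hlast, zero_pow hd.ne', mul_zero]
        have hf0 : eval (fun i => ξ (Fin.castSucc i)) f = 0 := pow_eq_zero_iff ha.ne' |>.mp this
        have hcast : (fun i => ξ (Fin.castSucc i)) = 0 := (hzero _).mp hf0
        funext i
        exact Fin.lastCases hlast (fun j => congrFun hcast j) i
      · -- ξ last ≠ 0: derive that τ is a gcd-th power, contradiction
        exfalso
        have hfne : eval (fun i => ξ (Fin.castSucc i)) f ≠ 0 := by
          intro h0
          rw [h0, zero_pow ha.ne'] at key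
          exact hlast (pow_eq_zero_iff hd.ne' |>.mp
            (by rcases mul_eq_zero.mp key.symm with h | h; exact absurd h hτ; exact h))
        set g := Nat.gcd a d with hgdef
        obtain ⟨a', ha'⟩ : g ∣ a := Nat.gcd_dvd_left a d
        obtain ⟨d', hd'⟩ : g ∣ d := Nat.gcd_dvd_right a d
        apply hτpow
        refine ⟨(eval (fun i => ξ (Fin.castSucc i)) f) ^ a' * (ξ (Fin.last n))⁻¹ ^ d', ?_⟩
        rw [mul_pow, ← pow_mul, ← pow_mul, mul_comm a' g, mul_comm d' g, ← ha', ← hd',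
          key, inv_pow]
        field_simp
    · intro h
      rw [h]
      simp only [Pi.zero_apply]
      have h0 : eval (fun _ : Fin n => (0 : ℚ_[p])) f = 0 := (hzero _).mpr rfl
      rw [h0, zero_pow ha.ne', zero_pow hd.ne', mul_zero, sub_zero]
end

section
/- For j ∈ {−1,1}ⁿ with j ≠ (1,…,1), the j-orthant ℚ_pⁿ(j) is contained in the disjoint union over l ≥ 1 of the sets d(−l,j)U_{n,j}, i.e. ℚ_pⁿ(j) ⊆ ⊔_{l=1}^{∞} d(−l,j)U_{n,j}, where the union is disjoint. -/
open scoped BigOperators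

/-- The `j`-orthant of `ℚ_pⁿ`: `ord(ξ_i) < 0` (i.e. `‖ξ_i‖ > 1`) iff `j_i = -1`. -/
def Orthant (p : ℕ) [Fact p.Prime] {n : ℕ} (j : Fin n → ℤ) : Set (Fin n → ℚ_[p]) :=
  {ξ | ∀ i, 1 < ‖ξ i‖ ↔ j i = -1}

/-- The dilation `d(l,j)`: multiply the `i`-th coordinate by `p^{l wᵢ}` when `j_i = -1`. -/
noncomputable def dil (p : ℕ) [Fact p.Prime] {n : ℕ} (w : Fin n → ℕ) (l : ℤ)
    (j : Fin n → ℤ) (ξ : Fin n → ℚ_[p]) : Fin n → ℚ_[p] :=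
  fun i => if j i = -1 then (p : ℚ_[p]) ^ (l * (w i : ℤ)) * ξ i else ξ i

/-- `U_{n,j} = {η ∈ ℤ_pⁿ : ∃ i, j_i = -1 and ord(η_i) ≤ w_i − 1}`
(the valuation condition is expressed as `‖η_i‖ ≥ p^{1-w_i}`, which also excludes `η_i = 0`). -/
def Uset (p : ℕ) [Fact p.Prime] {n : ℕ} (w : Fin n → ℕ) (j : Fin n → ℤ) :
    Set (Fin n → ℚ_[p]) :=
  {η | (∀ i, ‖η i‖ ≤ 1) ∧ ∃ i, j i = -1 ∧ (p : ℝ) ^ (1 - (w i : ℤ)) ≤ ‖η i‖}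

/-- For `j ≠ (1,…,1)`, the `j`-orthant is contained in the disjoint
union `⊔_{l ≥ 1} d(-l,j) U_{n,j}`. -/
theorem orthant_subset_disjoint_union (p : ℕ) [Fact p.Prime] {n : ℕ}
    (w : Fin n → ℕ) (hw : ∀ i, 0 < w i) (j : Fin n → ℤ)
    (hj : ∀ i, j i = 1 ∨ j i = -1) (hj' : j ≠ fun _ => 1) :
    Orthant p j ⊆ (⋃ l : ℕ, dil p w (-(l + 1 : ℤ)) j '' Uset p w j) ∧
    (Set.univ : Set ℕ).Pairwise fun l l' =>
      Disjoint (dil p w (-(l + 1 : ℤ)) j '' Uset p w j)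
        (dil p w (-(l' + 1 : ℤ)) j '' Uset p w j) := by
  have hp1 : (1 : ℝ) < (p : ℝ) := by exact_mod_cast (Fact.out : p.Prime).one_lt
  have hp0 : (0 : ℝ) < (p : ℝ) := lt_trans one_pos hp1
  have hpne : ((p : ℚ_[p])) ≠ 0 := by
    exact_mod_cast Nat.cast_ne_zero.mpr (Fact.out : p.Prime).ne_zero
  constructor
  · -- subset part
    intro ξ hξ
    -- there is some i₀ with j i₀ = -1
    obtain ⟨i0, hi0⟩ : ∃ i, j i = -1 := by
      by_contra h
      push_neg at h
      exact hj' (funext fun i => (hj i).resolve_right (h i))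
    -- basic facts about coordinates with j i = -1
    have hne : ∀ i, j i = -1 → ξ i ≠ 0 := by
      intro i hi h0
      have := (hξ i).mpr hi
      rw [h0, norm_zero] at this; linarith
    -- M i = -valuation, a positive natural number, and ‖ξ i‖ = p ^ (M i)
    set M : Fin n → ℕ := fun i => (-(ξ i).valuation).toNat with hM
    have hMval : ∀ i, j i = -1 → ((M i : ℤ) = -(ξ i).valuation ∧ 1 ≤ M i ∧
        ‖ξ i‖ = (p : ℝ) ^ (M i : ℤ)) := by
      intro i hi
      have hnorm : ‖ξ i‖ = (p : ℝ) ^ (-(ξ i).valuation) := Padic.norm_eq_zpow_neg_valuation (hne i hi)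
      have hlt : 0 < -(ξ i).valuation := by
        have h1 : (p : ℝ) ^ (0 : ℤ) < (p : ℝ) ^ (-(ξ i).valuation) := by
          rw [zpow_zero, ← hnorm]; exact (hξ i).mpr hi
        exact (zpow_lt_zpow_iff_right₀ hp1).mp h1
      have hcast : (M i : ℤ) = -(ξ i).valuation := Int.toNat_of_nonneg hlt.le
      refine ⟨hcast, ?_, by rw [hnorm, ← hcast]⟩
      omega
    -- the set of "negative" indices
    set S : Finset (Fin n) := Finset.univ.filter (fun i => j i = -1) with hS
    have hSne : S.Nonempty := ⟨i0, by simp [hS, hi0]⟩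
    set L : ℕ := S.sup (fun i => (M i - 1) / w i) with hL
    -- every negative index i satisfies M i ≤ (L+1) * w i
    have hub : ∀ i, j i = -1 → M i ≤ (L + 1) * w i := by
      intro i hi
      have hmem : i ∈ S := by simp [hS, hi]
      have hle : (M i - 1) / w i ≤ L := Finset.le_sup (f := fun i => (M i - 1) / w i) hmem
      have hlt := (Nat.div_lt_iff_lt_mul (hw i)).mp (Nat.lt_succ_of_le hle)
      have h1 := (hMval i hi).2.1
      calc M i = (M i - 1) + 1 := (Nat.succ_pred_eq_of_pos h1).symm
        _ ≤ (L + 1) * w i := Nat.succ_le_of_lt hlt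
    -- the sup is attained at some i1
    obtain ⟨i1, hi1S, hi1⟩ := Finset.exists_mem_eq_sup S hSne (fun i => (M i - 1) / w i)
    have hji1 : j i1 = -1 := by simpa [hS] using hi1S
    have hlb : L * w i1 + 1 ≤ M i1 := by
      have h2 := Nat.div_mul_le_self (M i1 - 1) (w i1)
      have h1 := (hMval i1 hji1).2.1
      have hL1 : L = (M i1 - 1) / w i1 := hL.trans hi1
      rw [hL1]
      omega
    -- define η and show membership
    refine Set.mem_iUnion.mpr ⟨L, dil p w ((L : ℤ) + 1) j ξ, ⟨?_, ?_⟩, ?_⟩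
    · -- all coordinates have norm ≤ 1
      intro i
      by_cases hi : j i = -1
      · obtain ⟨hc, h1, hn⟩ := hMval i hi
        have : ‖dil p w ((L : ℤ) + 1) j ξ i‖ =
            (p : ℝ) ^ ((M i : ℤ) - ((L : ℤ) + 1) * (w i : ℤ)) := by
          simp only [dil, if_pos hi, norm_mul, Padic.norm_p_zpow, hn,
            ← zpow_add₀ (ne_of_gt hp0)]
          ring_nf
        rw [this]
        apply zpow_le_one_of_nonpos₀ hp1.le
        have := hub i hi
        nlinarith [this]
      · have hle : ‖ξ i‖ ≤ 1 := by
          by_contra h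
          exact hi ((hξ i).mp (lt_of_not_ge h))
        simpa [dil, if_neg hi] using hle
    · -- the index i1 witnesses the second condition of Uset
      refine ⟨i1, hji1, ?_⟩
      obtain ⟨hc, h1, hn⟩ := hMval i1 hji1
      have heq : ‖dil p w ((L : ℤ) + 1) j ξ i1‖ =
          (p : ℝ) ^ ((M i1 : ℤ) - ((L : ℤ) + 1) * (w i1 : ℤ)) := by
        simp only [dil, if_pos hji1, norm_mul, Padic.norm_p_zpow, hn,
          ← zpow_add₀ (ne_of_gt hp0)]
        ring_nf
      rw [heq]
      apply zpow_le_zpow_right₀ hp1.le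
      have := hlb
      nlinarith [this]
    · -- dil (-(L+1)) undoes dil (L+1)
      funext i
      by_cases hi : j i = -1
      · simp only [dil, if_pos hi, ← mul_assoc, ← zpow_add₀ hpne]
        have : (-((L : ℤ) + 1)) * (w i : ℤ) + ((L : ℤ) + 1) * (w i : ℤ) = 0 := by ring
        rw [this, zpow_zero, one_mul]
      · simp only [dil, if_neg hi]
  · -- disjointness
    have key : ∀ l l' : ℕ, l < l' →
        Disjoint (dil p w (-(l + 1 : ℤ)) j '' Uset p w j)
          (dil p w (-(l' + 1 : ℤ)) j '' Uset p w j) := by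
      intro l l' hll'
      rw [Set.disjoint_left]
      rintro x ⟨η, ⟨hη1, _⟩, rfl⟩ ⟨η', ⟨hη'1, i, hji, hi⟩, heq⟩
      have hc := congrFun heq i
      simp only [dil, if_pos hji] at hc
      have h1 : (p : ℝ) ^ (((l' : ℤ) + 1) * (w i : ℤ)) * ‖η' i‖ =
          (p : ℝ) ^ (((l : ℤ) + 1) * (w i : ℤ)) * ‖η i‖ := by
        have h := congrArg (fun z => ‖z‖) hc
        simp only [norm_mul, Padic.norm_p_zpow] at h
        rwa [show -(-((l' : ℤ) + 1) * (w i : ℤ)) = ((l' : ℤ) + 1) * (w i : ℤ) from by ring,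
          show -(-((l : ℤ) + 1) * (w i : ℤ)) = ((l : ℤ) + 1) * (w i : ℤ) from by ring] at h
      have hw1 : (1 : ℤ) ≤ (w i : ℤ) := by exact_mod_cast hw i
      have hl1 : (l : ℤ) + 1 ≤ (l' : ℤ) := by exact_mod_cast hll'
      have hchain : (p : ℝ) ^ (((l : ℤ) + 1) * (w i : ℤ)) * (p : ℝ) ^ (1 : ℤ) ≤
          (p : ℝ) ^ (((l : ℤ) + 1) * (w i : ℤ)) * ‖η i‖ := by
        calc (p : ℝ) ^ (((l : ℤ) + 1) * (w i : ℤ)) * (p : ℝ) ^ (1 : ℤ)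
            = (p : ℝ) ^ (((l : ℤ) + 1) * (w i : ℤ) + 1) := (zpow_add₀ (ne_of_gt hp0) _ _).symm
          _ ≤ (p : ℝ) ^ (((l' : ℤ) + 1) * (w i : ℤ) + (1 - (w i : ℤ))) := by
              apply zpow_le_zpow_right₀ hp1.le
              nlinarith [hw1, hl1]
          _ = (p : ℝ) ^ (((l' : ℤ) + 1) * (w i : ℤ)) * (p : ℝ) ^ (1 - (w i : ℤ)) :=
              zpow_add₀ (ne_of_gt hp0) _ _
          _ ≤ (p : ℝ) ^ (((l' : ℤ) + 1) * (w i : ℤ)) * ‖η' i‖ := by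
              exact mul_le_mul_of_nonneg_left hi (zpow_pos hp0 _).le
          _ = (p : ℝ) ^ (((l : ℤ) + 1) * (w i : ℤ)) * ‖η i‖ := h1
      have hfinal : (p : ℝ) ^ (1 : ℤ) ≤ ‖η i‖ :=
        le_of_mul_le_mul_left hchain (zpow_pos hp0 _)
      have : (1 : ℝ) < ‖η i‖ := by
        rw [zpow_one] at hfinal; linarith
      exact absurd (hη1 i) (not_le.mpr this)
    intro l _ l' _ hne
    rcases hne.lt_or_gt with h | h
    · exact key _ _ h
    · exact (key _ _ h).symm
end
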